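/- arXiv:1810.07770 — 3 statements merged into one kernel-verified Lean document; each statement's English description precedes it below -/
import Mathlib

section
/- Let p ∈ ℕ be even and let a₁, ..., a_p ∈ (-1, 1). Define the p × (p+1) matrix M whose (j,l) entry for l ≤ p is: a_j if l = j, (-1)^{l-1} if l < j, and (-1)^l if l > j; and whose (j, p+1) entry is 1 for all j. Then rank(M) = p, i.e., M has full row rank, the p+1 columns span a p-dimensional space, and the null space of M is one-dimensional. -/
theorem matrix_M_rank (p : ℕ) (hp : Even p)
    (a : Fin p → ℝ) (ha : ∀ j, a j ∈ Set.Ioo (-1 : ℝ) 1)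
    (M : Matrix (Fin p) (Fin (p + 1)) ℝ)
    (hdiag : ∀ j : Fin p, M j j.castSucc = a j)
    (hbelow : ∀ j l : Fin p, l < j → M j l.castSucc = (-1 : ℝ) ^ (l : ℕ))
    (habove : ∀ j l : Fin p, j < l → M j l.castSucc = (-1 : ℝ) ^ ((l : ℕ) + 1))
    (hlast : ∀ j : Fin p, M j (Fin.last p) = 1) :
    M.rank = p := by
  have hinj : Function.Injective M.transpose.mulVecLin := by
    rw [← LinearMap.ker_eq_bot]
    apply (Submodule.eq_bot_iff _).2
    intro c hc
    simp only [LinearMap.mem_ker, Matrix.mulVecLin_apply] at hc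
    have hcol : ∀ i : Fin (p+1), ∑ j, M j i * c j = 0 := by
      intro i
      have h := congrFun hc i
      simpa [Matrix.mulVec, dotProduct, Matrix.transpose_apply] using h
    have hS : ∑ j, c j = 0 := by
      have h := hcol (Fin.last p)
      simpa [hlast] using h
    have hsplit : ∀ (l : Fin p) (f : Fin p → ℝ), ∑ j, f j =
        (∑ j, if j < l then f j else 0) + f l + (∑ j, if l < j then f j else 0) := by
      intro l f
      have hpt : ∀ j : Fin p, f j =
          ((if j < l then f j else 0) + (if j = l then f j else 0)) +
            (if l < j then f j else 0) := by
        intro j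
        rcases lt_trichotomy j l with h | h | h
        · simp [h, h.ne, asymm h]
        · simp [h, lt_irrefl]
        · simp [h, h.ne', asymm h]
      rw [Finset.sum_congr rfl (fun j _ => hpt j), Finset.sum_add_distrib,
        Finset.sum_add_distrib]
      simp
    have key : ∀ n : ℕ, ∀ l : Fin p, (l : ℕ) = n → c l = 0 := by
      intro n
      induction n using Nat.strong_induction_on with
      | _ n ih =>
        intro l hl
        have hIH : ∀ j : Fin p, j < l → c j = 0 := by
          intro j hj
          exact ih (j : ℕ) (hl ▸ hj) j rfl
        have h1 : (∑ j, if j < l then c j else 0) = 0 := by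
          apply Finset.sum_eq_zero
          intro j _
          split_ifs with h
          · exact hIH j h
          · rfl
        have hTc : (∑ j, if l < j then c j else 0) = - c l := by
          have h := hsplit l c
          rw [hS, h1] at h
          linarith
        have h := hcol l.castSucc
        rw [hsplit l (fun j => M j l.castSucc * c j)] at h
        have h2 : (∑ j, if j < l then M j l.castSucc * c j else 0) = 0 := by
          apply Finset.sum_eq_zero
          intro j _
          split_ifs with hj
          · rw [hIH j hj, mul_zero]
          · rfl
        have h3 : (∑ j, if l < j then M j l.castSucc * c j else 0)
            = (-1 : ℝ) ^ (l : ℕ) * (- c l) := by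
          rw [← hTc, Finset.mul_sum]
          apply Finset.sum_congr rfl
          intro j _
          split_ifs with hj
          · rw [hbelow j l hj]
          · ring
        rw [h2, h3, hdiag] at h
        have hne : a l ≠ (-1 : ℝ) ^ (l : ℕ) := by
          rcases Nat.even_or_odd (l : ℕ) with he | ho
          · rw [he.neg_one_pow]; exact (ha l).2.ne
          · rw [ho.neg_one_pow]; exact (ha l).1.ne'
        have hfac : c l * (a l - (-1 : ℝ) ^ (l : ℕ)) = 0 := by linarith [h]
        rcases mul_eq_zero.1 hfac with h0 | h0
        · exact h0
        · exact absurd (sub_eq_zero.1 h0) hne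
    exact funext (fun j => key (j : ℕ) j rfl)
  have h1 : M.transpose.rank = p := by
    have hk : LinearMap.ker M.transpose.mulVecLin = ⊥ := LinearMap.ker_eq_bot.2 hinj
    have hr := LinearMap.finrank_range_add_finrank_ker M.transpose.mulVecLin
    rw [hk, finrank_bot, add_zero] at hr
    rw [Matrix.rank]
    simpa using hr
  rw [← Matrix.rank_transpose]
  exact h1
end

section
/- Let p ∈ ℕ be even and let a₁, ..., a_p ∈ (-1, 1). Define the p × (p+1) matrix M with entries M(j,l) = a_j if l = j ≤ p, M(j,l) = (-1)^{l-1} if l < j ≤ p, M(j,l) = (-1)^l if j < l ≤ p, and M(j, p+1) = 1. Then there exists a nonzero vector ν ∈ ℝ^{p+1} in the null space of M whose first p components are all strictly positive. -/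
/-!
Subtracting row `j` of `M` from row `j + 1` kills every column except `j` and `j + 1`, so
`Mν = 0` amounts to the first row vanishing together with the two-term recursion
`(a_{j+1} - (-1)^j) ν_{j+1} = (a_j - (-1)^j) ν_j`. Since `|a_i| < 1`, both `a_j - (-1)^j` and
`a_{j+1} - (-1)^j` have the sign of `-(-1)^j`, so the recursion started at `ν_0 = 1` stays
positive; the last coordinate, which meets every row with coefficient `1`, is then chosen to
make the first row vanish.
-/

open Finset Matrix

section KernelWeight

variable {K : Type*} [Field K] [LinearOrder K] [IsStrictOrderedRing K]

lemma neg_one_pow_mul_sub_neg_one_pow_neg {x : K} (hx : x ∈ Set.Ioo (-1) 1) (i : ℕ) :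
    (-1) ^ i * (x - (-1) ^ i) < 0 := by
  rcases neg_one_pow_eq_or K i with h | h <;> rw [h] <;> linarith [hx.1, hx.2]

lemma sub_neg_one_pow_ne_zero {x : K} (hx : x ∈ Set.Ioo (-1) 1) (i : ℕ) :
    x - (-1) ^ i ≠ 0 :=
  right_ne_zero_of_mul (neg_one_pow_mul_sub_neg_one_pow_neg hx i).ne

def kernelWeight (a : ℕ → K) (j : ℕ) : K :=
  ∏ i ∈ range j, (a i - (-1) ^ i) / (a (i + 1) - (-1) ^ i)

lemma kernelWeight_pos {a : ℕ → K} {j : ℕ} (ha : ∀ i ≤ j, a i ∈ Set.Ioo (-1) 1) :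
    0 < kernelWeight a j := by
  refine prod_pos fun i hi => ?_
  have hij : i < j := mem_range.mp hi
  rw [← mul_div_mul_left _ _ (pow_ne_zero i (neg_ne_zero.mpr one_ne_zero) : (-1 : K) ^ i ≠ 0)]
  exact div_pos_of_neg_of_neg (neg_one_pow_mul_sub_neg_one_pow_neg (ha i hij.le) i)
    (neg_one_pow_mul_sub_neg_one_pow_neg (ha (i + 1) hij) i)

lemma sub_neg_one_pow_mul_kernelWeight_succ (a : ℕ → K) {j : ℕ}
    (ha : a (j + 1) ∈ Set.Ioo (-1) 1) :
    (a (j + 1) - (-1) ^ j) * kernelWeight a (j + 1) = (a j - (-1) ^ j) * kernelWeight a j := by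
  have hne := sub_neg_one_pow_ne_zero ha j
  rw [kernelWeight, prod_range_succ, ← kernelWeight]
  field_simp

end KernelWeight

section RowDifferences

variable {R : Type*} [CommRing R] {n : ℕ} {a : Fin (n + 1) → R}
  {M : Matrix (Fin (n + 1)) (Fin (n + 1 + 1)) R}

lemma row_succ_sub_row_castSucc
    (hdiag : ∀ j : Fin (n + 1), M j j.castSucc = a j)
    (hbelow : ∀ j l : Fin (n + 1), l < j → M j l.castSucc = (-1 : R) ^ (l : ℕ))
    (habove : ∀ j l : Fin (n + 1), j < l → M j l.castSucc = (-1 : R) ^ ((l : ℕ) + 1))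
    (hlast : ∀ j : Fin (n + 1), M j (Fin.last (n + 1)) = 1) (i : Fin n) :
    M i.succ - M i.castSucc = Pi.single i.castSucc.castSucc ((-1) ^ (i : ℕ) - a i.castSucc)
      + Pi.single i.succ.castSucc (a i.succ - (-1) ^ (i : ℕ)) := by
  have hlt : i.castSucc < i.succ := Fin.castSucc_lt_succ
  funext l
  induction l using Fin.lastCases with
  | last => simp [hlast]
  | cast l =>
    simp only [Pi.sub_apply, Pi.add_apply, Pi.single_apply, Fin.castSucc_inj]
    rcases lt_trichotomy l i.castSucc with hl | rfl | hl
    · simp [hbelow _ _ hl, hbelow _ _ (hl.trans hlt), hl.ne, (hl.trans hlt).ne]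
    · simp [hdiag, hbelow _ _ hlt, hlt.ne]
    · rcases (Fin.castSucc_lt_iff_succ_le.mp hl).eq_or_lt with rfl | hl'
      · rw [hdiag, habove _ _ hlt]
        simp [hlt.ne', pow_succ]
      · simp [habove _ _ hl, habove _ _ hl', hl.ne', hl'.ne']

lemma mulVec_eq_zero_of_row_zero
    (hdiag : ∀ j : Fin (n + 1), M j j.castSucc = a j)
    (hbelow : ∀ j l : Fin (n + 1), l < j → M j l.castSucc = (-1 : R) ^ (l : ℕ))
    (habove : ∀ j l : Fin (n + 1), j < l → M j l.castSucc = (-1 : R) ^ ((l : ℕ) + 1))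
    (hlast : ∀ j : Fin (n + 1), M j (Fin.last (n + 1)) = 1) {ν : Fin (n + 1 + 1) → R}
    (hrow : M 0 ⬝ᵥ ν = 0)
    (hbalance : ∀ i : Fin n, (a i.succ - (-1) ^ (i : ℕ)) * ν i.succ.castSucc
      = (a i.castSucc - (-1) ^ (i : ℕ)) * ν i.castSucc.castSucc) :
    M *ᵥ ν = 0 := by
  funext j
  induction j using Fin.induction with
  | zero => exact hrow
  | succ i ih =>
    have hdiff : M i.succ ⬝ᵥ ν - M i.castSucc ⬝ᵥ ν = 0 := by
      rw [← sub_dotProduct, row_succ_sub_row_castSucc hdiag hbelow habove hlast, add_dotProduct,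
        single_dotProduct, single_dotProduct, hbalance]
      ring
    exact (sub_eq_zero.mp hdiff).trans ih

end RowDifferences

theorem matrix_M_positive_kernel_general (p : ℕ)
    (a : Fin p → ℝ) (ha : ∀ j, a j ∈ Set.Ioo (-1 : ℝ) 1)
    (M : Matrix (Fin p) (Fin (p + 1)) ℝ)
    (hdiag : ∀ j : Fin p, M j j.castSucc = a j)
    (hbelow : ∀ j l : Fin p, l < j → M j l.castSucc = (-1 : ℝ) ^ (l : ℕ))
    (habove : ∀ j l : Fin p, j < l → M j l.castSucc = (-1 : ℝ) ^ ((l : ℕ) + 1))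
    (hlast : ∀ j : Fin p, M j (Fin.last p) = 1) :
    ∃ ν : Fin (p + 1) → ℝ, ν ≠ 0 ∧ M.mulVec ν = 0 ∧
      ∀ l : Fin p, 0 < ν l.castSucc := by
  cases p with
  | zero => exact ⟨1, one_ne_zero, Subsingleton.elim _ _, fun l => l.elim0⟩
  | succ n =>
    set A : ℕ → ℝ := fun k => a (Fin.ofNat _ k)
    have hA : ∀ j : Fin (n + 1), A j = a j := fun j => congrArg a (Fin.ofNat_val_eq_self j)
    set w : Fin (n + 1) → ℝ := fun j => kernelWeight A j
    have hw : ∀ j, 0 < w j := fun j => kernelWeight_pos fun _ _ => ha _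
    set ν := Fin.snoc (α := fun _ => ℝ) w (-∑ j, M 0 j.castSucc * w j)
    refine ⟨ν, fun h => (hw 0).ne' (by simpa [ν] using congrFun h (Fin.castSucc 0)), ?_,
      fun l => by simpa [ν] using hw l⟩
    refine mulVec_eq_zero_of_row_zero hdiag hbelow habove hlast ?_ fun i => ?_
    · simp [ν, dotProduct, Fin.sum_univ_castSucc, hlast]
    · simp only [ν, w, Fin.snoc_castSucc, ← hA, Fin.val_succ, Fin.val_castSucc]
      exact sub_neg_one_pow_mul_kernelWeight_succ A (ha _)

theorem matrix_M_positive_kernel (p : ℕ) (hp : Even p)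
    (a : Fin p → ℝ) (ha : ∀ j, a j ∈ Set.Ioo (-1 : ℝ) 1)
    (M : Matrix (Fin p) (Fin (p + 1)) ℝ)
    (hdiag : ∀ j : Fin p, M j j.castSucc = a j)
    (hbelow : ∀ j l : Fin p, l < j → M j l.castSucc = (-1 : ℝ) ^ (l : ℕ))
    (habove : ∀ j l : Fin p, j < l → M j l.castSucc = (-1 : ℝ) ^ ((l : ℕ) + 1))
    (hlast : ∀ j : Fin p, M j (Fin.last p) = 1) :
    ∃ ν : Fin (p + 1) → ℝ, ν ≠ 0 ∧ M.mulVec ν = 0 ∧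
      ∀ l : Fin p, 0 < ν l.castSucc :=
  matrix_M_positive_kernel_general p a ha M hdiag hbelow habove hlast
end

section
/- Let H_0, ..., H_{E-1} be symmetric PSD matrices in ℝ^{n×n} with H = Σ_k H_k, and suppose all nonzero eigenvalues of H lie in [λ_min, λ_max] with λ_min > 0. Let η > 0 satisfy η ≤ min(B/(λ_max E), λ_min B/(2 λ_max² E²)) for some B > 0. Then for any vector ξ in the column space of H, ‖∏_{k=E-1}^{0} (I − (η/B) H_k) ξ‖ ≤ (1 − η λ_min/(2B)) ‖ξ‖, provided additionally that the column spaces of all H_k are contained in that of H. -/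
noncomputable def l2norm {n : ℕ} (v : Fin n → ℝ) : ℝ := Real.sqrt (∑ i, v i ^ 2)

/-!
Write `t = η / B` and `P` for the product. Expanded in the normed ring of matrices with the
operator norm, `P` equals `1 - t H` up to an error of norm at most `(1 + L)^E - 1 - E L ≤ (E L)^2`,
where `L = t λ_max` bounds every `‖t H_k‖` because `0 ≤ H_k ≤ H ≤ λ_max`. On the column space of
`H` the first-order term `1 - t H` contracts by `1 - t λ_min`, since `0 ≤ 1 - t λ ≤ 1 - t λ_min`
on the nonzero spectrum; the step-size condition makes the error at most `t λ_min / 2`.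
-/

open Matrix

theorem List.norm_prod_map_one_sub_sub_le {R : Type*} [NormedRing R] (l : List R) {L : ℝ}
    (hl : ∀ x ∈ l, ‖x‖ ≤ L) :
    ‖(l.map (1 - ·)).prod - (1 - l.sum)‖ ≤ (1 + L) ^ l.length - 1 - l.length * L := by
  induction l with
  | nil => simp
  | cons x l ih =>
    have hx : ‖x‖ ≤ L := hl x mem_cons_self
    have hl' : ∀ y ∈ l, ‖y‖ ≤ L := fun y hy => hl y (mem_cons_of_mem x hy)
    have hL : 0 ≤ L := (norm_nonneg x).trans hx
    have hS : ‖l.sum‖ ≤ l.length * L := by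
      refine (l.le_sum_of_subadditive norm norm_zero.le norm_add_le).trans ?_
      simpa using (l.map norm).sum_le_card_nsmul L (by simpa using hl')
    set D := (l.map (1 - ·)).prod - (1 - l.sum)
    have hD : ‖D‖ ≤ (1 + L) ^ l.length - 1 - l.length * L := ih hl'
    have hsplit : ((x :: l).map (1 - ·)).prod - (1 - (x :: l).sum) = D - x * D + x * l.sum := by
      simp only [map_cons, prod_cons, sum_cons, D]
      noncomm_ring
    calc _ = ‖D - x * D + x * l.sum‖ := by rw [hsplit]
      _ ≤ ‖D‖ + ‖x‖ * ‖D‖ + ‖x‖ * ‖l.sum‖ := by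
          refine (norm_add_le _ _).trans (add_le_add ((norm_sub_le _ _).trans ?_) (norm_mul_le _ _))
          exact add_le_add_right (norm_mul_le _ _) _
      _ ≤ _ := by
          have := mul_le_mul hx hD (norm_nonneg D) hL
          have := mul_le_mul hx hS (norm_nonneg _) hL
          simp only [length_cons, Nat.cast_succ, pow_succ]
          nlinarith

theorem one_add_pow_sub_one_sub_mul_le_sq {x : ℝ} {m : ℕ} (hx : 0 ≤ x) (hmx : m * x ≤ 1) :
    (1 + x) ^ m - 1 - m * x ≤ (m * x) ^ 2 := by
  have hexp : (1 + x) ^ m ≤ Real.exp (m * x) := by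
    rw [Real.exp_nat_mul]
    gcongr
    linarith [Real.add_one_le_exp x]
  have hquad := Real.exp_bound' (by positivity) hmx (n := 2) two_pos
  norm_num [Finset.sum_range_succ] at hquad
  nlinarith [sq_nonneg ((m : ℝ) * x)]

theorem stepSize_bounds {B η lmin lmax : ℝ} {E : ℕ} (hB : 0 < B) (hη : 0 < η)
    (hηbound : η ≤ min (B / (lmax * E)) (lmin * B / (2 * lmax ^ 2 * E ^ 2))) :
    0 < lmax ∧ η / B * lmax ≤ 1 ∧ E * (η / B * lmax) ≤ 1 ∧
      (E * (η / B * lmax)) ^ 2 ≤ η / B * lmin / 2 := by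
  have hlE : 0 < lmax * E := by
    by_contra! h
    have := div_nonpos_of_nonneg_of_nonpos hB.le h
    linarith [hηbound.trans (min_le_left _ _)]
  have hE : (1 : ℝ) ≤ E := Nat.one_le_cast.mpr (Nat.pos_of_ne_zero (by rintro rfl; simp at hlE))
  have hlmax : 0 < lmax := pos_of_mul_pos_left hlE (Nat.cast_nonneg E)
  have h1 : η * (lmax * E) ≤ B := (le_div_iff₀ hlE).mp (hηbound.trans (min_le_left _ _))
  have h2 : η * (2 * lmax ^ 2 * E ^ 2) ≤ lmin * B :=
    (le_div_iff₀ (by positivity)).mp (hηbound.trans (min_le_right _ _))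
  have hEt : E * (η / B * lmax) ≤ 1 := by
    rw [show (E : ℝ) * (η / B * lmax) = η * (lmax * E) / B by ring, div_le_one hB]
    exact h1
  refine ⟨hlmax, ?_, hEt, ?_⟩
  · nlinarith [div_pos hη hB]
  · calc (E * (η / B * lmax)) ^ 2 = η * (η * (2 * lmax ^ 2 * E ^ 2)) / (2 * B ^ 2) := by
          field_simp
      _ ≤ η * (lmin * B) / (2 * B ^ 2) := by gcongr
      _ = η / B * lmin / 2 := by field_simp

variable {n : ℕ}

lemma l2norm_eq_sqrt_dotProduct (v : Fin n → ℝ) : l2norm v = √(v ⬝ᵥ v) := by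
  simp [l2norm, dotProduct, sq]

lemma l2norm_eq_norm (v : Fin n → ℝ) : l2norm v = ‖WithLp.toLp 2 v‖ := by
  simp [l2norm, EuclideanSpace.norm_eq]

lemma l2norm_nonneg (v : Fin n → ℝ) : 0 ≤ l2norm v := Real.sqrt_nonneg _

lemma l2norm_add_le (u v : Fin n → ℝ) : l2norm (u + v) ≤ l2norm u + l2norm v := by
  simpa only [l2norm_eq_norm, WithLp.toLp_add] using norm_add_le _ _

lemma l2norm_smul (c : ℝ) (v : Fin n → ℝ) : l2norm (c • v) = |c| * l2norm v := by
  rw [l2norm_eq_norm, l2norm_eq_norm, WithLp.toLp_smul, norm_smul, Real.norm_eq_abs]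

namespace Matrix

open scoped MatrixOrder

lemma l2norm_mulVec_le_of_conjTranspose_mul_le {M N : Matrix (Fin n) (Fin n) ℝ}
    (h : Mᴴ * M ≤ Nᴴ * N) (v : Fin n → ℝ) : l2norm (M *ᵥ v) ≤ l2norm (N *ᵥ v) := by
  have hquad (A : Matrix (Fin n) (Fin n) ℝ) : v ⬝ᵥ ((Aᴴ * A) *ᵥ v) = (A *ᵥ v) ⬝ᵥ (A *ᵥ v) := by
    rw [← mulVec_mulVec, dotProduct_mulVec, conjTranspose_eq_transpose_of_trivial,
      vecMul_transpose]
  have hq := (Matrix.le_iff.mp h).dotProduct_mulVec_nonneg v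
  rw [star_trivial, sub_mulVec, dotProduct_sub, hquad, hquad] at hq
  rw [l2norm_eq_sqrt_dotProduct, l2norm_eq_sqrt_dotProduct]
  exact Real.sqrt_le_sqrt (by linarith)

lemma IsHermitian.le_algebraMap_of_eigenvalues_le {H : Matrix (Fin n) (Fin n) ℝ}
    (hH : H.IsHermitian) {c : ℝ} (h : ∀ i, hH.eigenvalues i ≤ c) : H ≤ algebraMap ℝ _ c := by
  refine le_algebraMap_of_spectrum_le (fun x hx => ?_) hH.isSelfAdjoint
  obtain ⟨i, rfl⟩ := hH.spectrum_real_eq_range_eigenvalues ▸ hx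
  exact h i

lemma IsHermitian.l2norm_one_sub_smul_mulVec_mulVec_le {H : Matrix (Fin n) (Fin n) ℝ}
    (hH : H.IsHermitian) {t lmin lmax : ℝ} (ht : 0 ≤ t) (htl : t * lmax ≤ 1)
    (heig : ∀ i, hH.eigenvalues i = 0 ∨ (lmin ≤ hH.eigenvalues i ∧ hH.eigenvalues i ≤ lmax))
    (w : Fin n → ℝ) :
    l2norm ((1 - t • H) *ᵥ (H *ᵥ w)) ≤ (1 - t * lmin) * l2norm (H *ᵥ w) := by
  rcases le_or_gt (t * lmin) 1 with hc | hc
  · have hspec : ∀ x ∈ spectrum ℝ H, (x * (1 - t * x)) ^ 2 ≤ ((1 - t * lmin) * x) ^ 2 := by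
      intro x hx
      obtain ⟨i, rfl⟩ := hH.spectrum_real_eq_range_eigenvalues ▸ hx
      rcases heig i with h0 | ⟨hlo, hhi⟩
      · simp [h0]
      · have : 0 ≤ 1 - t * hH.eigenvalues i := by nlinarith
        have : 1 - t * hH.eigenvalues i ≤ 1 - t * lmin := by nlinarith
        rw [mul_pow, mul_pow, mul_comm]
        gcongr
    have hsq : (H * (1 - t • H)) ^ 2 ≤ ((1 - t * lmin) • H) ^ 2 := by
      have := cfc_mono hspec
      rwa [cfc_pow .., cfc_mul .., cfc_id' .., cfc_sub .., cfc_const_one .., cfc_const_mul_id ..,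
        cfc_pow .., cfc_const_mul_id ..] at this
    have hcomm : (1 - t • H) * H = H * (1 - t • H) := by
      simp [sub_mul, mul_sub]
    have hM : (H * (1 - t • H))ᴴ = H * (1 - t • H) := by
      rw [conjTranspose_mul, conjTranspose_sub, conjTranspose_one, conjTranspose_smul, hH.eq,
        star_trivial, hcomm]
    have hN : ((1 - t * lmin) • H)ᴴ = (1 - t * lmin) • H := by
      rw [conjTranspose_smul, hH.eq, star_trivial]
    calc l2norm ((1 - t • H) *ᵥ (H *ᵥ w)) = l2norm ((H * (1 - t • H)) *ᵥ w) := by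
          rw [mulVec_mulVec, hcomm]
      _ ≤ l2norm (((1 - t * lmin) • H) *ᵥ w) :=
          l2norm_mulVec_le_of_conjTranspose_mul_le (by rwa [hM, hN, ← sq, ← sq]) w
      _ = (1 - t * lmin) * l2norm (H *ᵥ w) := by
          rw [smul_mulVec, l2norm_smul, abs_of_nonneg (by linarith)]
  · have hzero : hH.eigenvalues = 0 := by
      funext i
      refine (heig i).resolve_right fun ⟨hlo, hhi⟩ => ?_
      nlinarith
    simp [hH.eigenvalues_eq_zero_iff.mp hzero, l2norm]

section L2Operator

open scoped Matrix.Norms.L2Operator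

lemma l2norm_mulVec_le (M : Matrix (Fin n) (Fin n) ℝ) (v : Fin n → ℝ) :
    l2norm (M *ᵥ v) ≤ ‖M‖ * l2norm v := by
  simpa [l2norm_eq_norm] using l2_opNorm_mulVec M (WithLp.toLp 2 v)

lemma l2_opNorm_le_of_l2norm_mulVec_le {M : Matrix (Fin n) (Fin n) ℝ} {c : ℝ} (hc : 0 ≤ c)
    (h : ∀ v, l2norm (M *ᵥ v) ≤ c * l2norm v) : ‖M‖ ≤ c := by
  rw [l2_opNorm_def]
  refine ContinuousLinearMap.opNorm_le_bound _ hc fun x => ?_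
  simpa [l2norm_eq_norm, toLpLin_apply] using h x.ofLp

lemma l2_opNorm_le_of_nonneg_of_le_algebraMap {A : Matrix (Fin n) (Fin n) ℝ} {c : ℝ}
    (hc : 0 ≤ c) (hA : 0 ≤ A) (hAc : A ≤ algebraMap ℝ _ c) : ‖A‖ ≤ c := by
  have hsa : IsSelfAdjoint A := .of_nonneg hA
  have hsq : A ^ 2 ≤ algebraMap ℝ _ (c ^ 2) := by
    rw [← cfc_pow_id (R := ℝ) A 2]
    refine cfc_le_algebraMap _ _ _ fun x hx => ?_
    have hx0 : 0 ≤ x := spectrum_nonneg_of_nonneg hA hx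
    have hxc : x ≤ c := (le_algebraMap_iff_spectrum_le (R := ℝ)).mp hAc x hx
    gcongr
  refine l2_opNorm_le_of_l2norm_mulVec_le hc fun v => ?_
  have key := l2norm_mulVec_le_of_conjTranspose_mul_le (M := A) (N := c • 1) ?_ v
  · rwa [smul_mulVec, one_mulVec, l2norm_smul, abs_of_nonneg hc] at key
  · rwa [hsa.isHermitian.eq, conjTranspose_smul, conjTranspose_one, star_trivial, smul_mul_smul,
      mul_one, ← sq, ← sq, ← Algebra.algebraMap_eq_smul_one]

lemma l2norm_prod_one_sub_smul_sub_mulVec_le {E : ℕ} (A : Fin E → Matrix (Fin n) (Fin n) ℝ)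
    (hA : ∀ k, (A k).PosSemidef) (hH : (∑ k, A k).IsHermitian) {t lmax : ℝ} (ht : 0 ≤ t)
    (hlmax : 0 ≤ lmax) (heig : ∀ i, hH.eigenvalues i ≤ lmax) (v : Fin n → ℝ) :
    l2norm (((List.ofFn fun k => 1 - t • A k).reverse.prod - (1 - t • ∑ k, A k)) *ᵥ v) ≤
      ((1 + t * lmax) ^ E - 1 - E * (t * lmax)) * l2norm v := by
  have hnorm (k : Fin E) : ‖t • A k‖ ≤ t * lmax := by
    have hAH : A k ≤ ∑ j, A j :=
      Finset.single_le_sum (fun j _ => (hA j).nonneg) (Finset.mem_univ k)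
    rw [norm_smul, Real.norm_of_nonneg ht]
    exact mul_le_mul_of_nonneg_left (l2_opNorm_le_of_nonneg_of_le_algebraMap hlmax (hA k).nonneg
      (hAH.trans (hH.le_algebraMap_of_eigenvalues_le heig))) ht
  have hexpand := List.norm_prod_map_one_sub_sub_le (List.ofFn fun k => t • A k).reverse
    (L := t * lmax) (by simpa using hnorm)
  rw [List.map_reverse, List.map_ofFn, List.sum_reverse, List.sum_ofFn, List.length_reverse,
    List.length_ofFn, ← Finset.smul_sum, Function.comp_def] at hexpand
  exact (l2norm_mulVec_le _ v).trans (mul_le_mul_of_nonneg_right hexpand (l2norm_nonneg v))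

end L2Operator

end Matrix

theorem product_contraction_general (n E : ℕ)
    (A : Fin E → Matrix (Fin n) (Fin n) ℝ)
    (hA : ∀ k, (A k).PosSemidef)
    (H : Matrix (Fin n) (Fin n) ℝ) (hHdef : H = ∑ k, A k)
    (hH : H.PosSemidef)
    (lmin lmax : ℝ)
    (heig : ∀ i, hH.isHermitian.eigenvalues i = 0 ∨
      (lmin ≤ hH.isHermitian.eigenvalues i ∧ hH.isHermitian.eigenvalues i ≤ lmax))
    (B η : ℝ) (hB : 0 < B) (hη : 0 < η)
    (hηbound : η ≤ min (B / (lmax * E)) (lmin * B / (2 * lmax ^ 2 * E ^ 2)))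
    (ξ : Fin n → ℝ) (hξ : ∃ w, ξ = H.mulVec w) :
    l2norm (((List.ofFn fun k : Fin E =>
        (1 : Matrix (Fin n) (Fin n) ℝ) - (η / B) • A k).reverse.prod).mulVec ξ) ≤
      (1 - η * lmin / (2 * B)) * l2norm ξ := by
  obtain ⟨hlmax, htl, hEt, hsq⟩ := stepSize_bounds hB hη hηbound
  obtain ⟨w, rfl⟩ := hξ
  subst hHdef
  have ht : 0 ≤ η / B := (div_pos hη hB).le
  have hcontr := hH.isHermitian.l2norm_one_sub_smul_mulVec_mulVec_le ht htl heig w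
  have hpert := l2norm_prod_one_sub_smul_sub_mulVec_le A hA hH.isHermitian ht hlmax.le
    (fun i => (heig i).elim (fun h => h ▸ hlmax.le) And.right) ((∑ k, A k) *ᵥ w)
  have hsmall := one_add_pow_sub_one_sub_mul_le_sq (by positivity) hEt
  set P := (List.ofFn fun k : Fin E => (1 : Matrix (Fin n) (Fin n) ℝ) - (η / B) • A k).reverse.prod
  set ξ := (∑ k, A k) *ᵥ w
  calc l2norm (P *ᵥ ξ)
      = l2norm ((1 - (η / B) • ∑ k, A k) *ᵥ ξ + (P - (1 - (η / B) • ∑ k, A k)) *ᵥ ξ) := by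
        rw [← add_mulVec, add_sub_cancel]
    _ ≤ (1 - η / B * lmin) * l2norm ξ + η / B * lmin / 2 * l2norm ξ :=
        (l2norm_add_le _ _).trans <| add_le_add hcontr <|
          hpert.trans (mul_le_mul_of_nonneg_right (hsmall.trans hsq) (l2norm_nonneg ξ))
    _ = (1 - η * lmin / (2 * B)) * l2norm ξ := by ring

theorem product_contraction (n E : ℕ)
    (A : Fin E → Matrix (Fin n) (Fin n) ℝ)
    (hA : ∀ k, (A k).PosSemidef)
    (H : Matrix (Fin n) (Fin n) ℝ) (hHdef : H = ∑ k, A k)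
    (hH : H.PosSemidef)
    (lmin lmax : ℝ) (hlmin : 0 < lmin)
    (heig : ∀ i, hH.isHermitian.eigenvalues i = 0 ∨
      (lmin ≤ hH.isHermitian.eigenvalues i ∧ hH.isHermitian.eigenvalues i ≤ lmax))
    (B η : ℝ) (hB : 0 < B) (hη : 0 < η)
    (hηbound : η ≤ min (B / (lmax * E)) (lmin * B / (2 * lmax ^ 2 * E ^ 2)))
    (hcol : ∀ (k : Fin E) (v : Fin n → ℝ), ∃ w, (A k).mulVec v = H.mulVec w)
    (ξ : Fin n → ℝ) (hξ : ∃ w, ξ = H.mulVec w) :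
    l2norm (((List.ofFn fun k : Fin E =>
        (1 : Matrix (Fin n) (Fin n) ℝ) - (η / B) • A k).reverse.prod).mulVec ξ) ≤
      (1 - η * lmin / (2 * B)) * l2norm ξ :=
  product_contraction_general n E A hA H hHdef hH lmin lmax heig B η hB hη hηbound ξ hξ
end
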